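/- Let W = U' ⊕ U'' and let π denote projection onto U' along U''. For finite-dimensional subspaces V₁, V₂ ⊆ W, dim(π(V₁)) - dim(π(V₁) ∩ π(V₂)) ≤ dim(V₁) - dim(V₁ ∩ V₂). -/

import Mathlib

/-!
The inequality holds for every linear map `π`. By rank–nullity for `π` restricted to `V`,
`dim V - dim π(V) = dim (V ∩ ker π)`, which is monotone in `V`; so passing from `V₁` to
`V₁ ∩ V₂` loses at least as much dimension as passing from `π(V₁)` to `π(V₁ ∩ V₂)`,
and `π(V₁ ∩ V₂) ⊆ π(V₁) ∩ π(V₂)`.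
-/

open Module

section

variable {K W U : Type*} [Field K] [AddCommGroup W] [Module K W] [AddCommGroup U] [Module K U]

theorem Submodule.finrank_map_add_finrank_inf_ker (f : W →ₗ[K] U) (V : Submodule K W)
    [FiniteDimensional K V] :
    finrank K ↥(V.map f) + finrank K ↥(V ⊓ LinearMap.ker f) = finrank K V := by
  have h := LinearMap.finrank_range_add_finrank_ker (f.domRestrict V)
  rw [LinearMap.range_domRestrict, LinearMap.ker_domRestrict] at h
  rwa [(V.equivSubtypeMap _).finrank_eq, Submodule.map_comap_subtype] at h

theorem Submodule.finrank_map_sub_finrank_map_inf_le (f : W →ₗ[K] U) (V₁ V₂ : Submodule K W)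
    [FiniteDimensional K V₁] :
    (finrank K ↥(V₁.map f) : ℤ) - finrank K ↥(V₁.map f ⊓ V₂.map f)
      ≤ finrank K V₁ - finrank K ↥(V₁ ⊓ V₂) := by
  have rank_nullity₁ := finrank_map_add_finrank_inf_ker f V₁
  have rank_nullity₁₂ := finrank_map_add_finrank_inf_ker f (V₁ ⊓ V₂)
  have image_le : finrank K ↥((V₁ ⊓ V₂).map f) ≤ finrank K ↥(V₁.map f ⊓ V₂.map f) :=
    finrank_mono (map_inf_le f)
  have kernel_le : finrank K ↥(V₁ ⊓ V₂ ⊓ LinearMap.ker f) ≤ finrank K ↥(V₁ ⊓ LinearMap.ker f) :=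
    finrank_mono (inf_le_inf_right _ inf_le_left)
  omega

end

theorem dim_proj_sub_le_general {K W : Type*} [Field K] [AddCommGroup W] [Module K W]
    (U' U'' : Submodule K W) (hcompl : IsCompl U' U'')
    (V₁ V₂ : Submodule K W) [FiniteDimensional K V₁] :
    (Module.finrank K ↥(V₁.map (U'.linearProjOfIsCompl U'' hcompl)) : ℤ)
      - (Module.finrank K ↥(V₁.map (U'.linearProjOfIsCompl U'' hcompl) ⊓
           V₂.map (U'.linearProjOfIsCompl U'' hcompl)) : ℤ)
    ≤ (Module.finrank K V₁ : ℤ) - (Module.finrank K ↥(V₁ ⊓ V₂) : ℤ) :=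
  Submodule.finrank_map_sub_finrank_map_inf_le _ V₁ V₂

/-- For a projection `π` onto `U'` along `U''`,
`dim π(V₁) - dim(π(V₁) ∩ π(V₂)) ≤ dim V₁ - dim (V₁ ∩ V₂)`. -/
theorem dim_proj_sub_le {K W : Type*} [Field K] [AddCommGroup W] [Module K W]
    (U' U'' : Submodule K W) (hcompl : IsCompl U' U'')
    (V₁ V₂ : Submodule K W) [FiniteDimensional K V₁] [FiniteDimensional K V₂] :
    (Module.finrank K ↥(V₁.map (U'.linearProjOfIsCompl U'' hcompl)) : ℤ)
      - (Module.finrank K ↥(V₁.map (U'.linearProjOfIsCompl U'' hcompl) ⊓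
           V₂.map (U'.linearProjOfIsCompl U'' hcompl)) : ℤ)
    ≤ (Module.finrank K V₁ : ℤ) - (Module.finrank K ↥(V₁ ⊓ V₂) : ℤ) :=
  dim_proj_sub_le_general U' U'' hcompl V₁ V₂
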